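/- Let ẙ₁,…,ẙ_N ∈ ℝ⁴ be unit vectors and k₁,…,k_N > 0. Suppose there exist indices i₁ ≠ i₂ with ẙ_{i₁,4} = ẙ_{i₂,4} = 0 such that ẙ̄_{i₁} and ẙ̄_{i₂} are linearly independent, and an index j₁ with ẙ_{j₁,4} ≠ 0 (Case 1 of the observability assumption: at least 2 vectorial and 1 position measurements). Then for every E ∈ SE(3), V(E) = 0 if and only if E = I₄; i.e. V has a unique global minimum at the identity. -/

import Mathlib

open Matrix BigOperators

noncomputable section

/-- The Euclidean norm of a vector in `ℝⁿ`. -/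
def enorm' {n : ℕ} (x : Fin n → ℝ) : ℝ := Real.sqrt (∑ i, x i ^ 2)

/-- Normalization of a vector: `x / |x|`. -/
def nrm {n : ℕ} (x : Fin n → ℝ) : Fin n → ℝ := (enorm' x)⁻¹ • x

/-- `R ∈ SO(3)`: rotation matrices. -/
def SO3 (R : Matrix (Fin 3) (Fin 3) ℝ) : Prop := Rᵀ * R = 1 ∧ R.det = 1

/-- The 4×4 block matrix `[[M, m],[0ᵀ, 0]]`. -/
def blk (M : Matrix (Fin 3) (Fin 3) ℝ) (m : Fin 3 → ℝ) : Matrix (Fin 4) (Fin 4) ℝ :=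
  fun i j =>
    if h : (i : ℕ) < 3 then
      if h' : (j : ℕ) < 3 then M ⟨i, h⟩ ⟨j, h'⟩ else m ⟨i, h⟩
    else 0

/-- The 4×4 block matrix `[[R, p],[0ᵀ, 1]]`. -/
def toSE3 (R : Matrix (Fin 3) (Fin 3) ℝ) (p : Fin 3 → ℝ) : Matrix (Fin 4) (Fin 4) ℝ :=
  fun i j =>
    if h : (i : ℕ) < 3 then
      if h' : (j : ℕ) < 3 then R ⟨i, h⟩ ⟨j, h'⟩ else p ⟨i, h⟩
    else if (j : ℕ) < 3 then 0 else 1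

/-- The Special Euclidean group SE(3), as a subset of `ℝ^{4×4}`. -/
def SE3 : Set (Matrix (Fin 4) (Fin 4) ℝ) := {X | ∃ R p, SO3 R ∧ X = toSE3 R p}

/-- The skew-symmetric matrix `ω_×` associated with the cross product by `ω`. -/
def crossMat (ω : Fin 3 → ℝ) : Matrix (Fin 3) (Fin 3) ℝ :=
  !![0, -ω 2, ω 1; ω 2, 0, -ω 0; -ω 1, ω 0, 0]

/-- The cross product on `ℝ³`. -/
def cross3 (u v : Fin 3 → ℝ) : Fin 3 → ℝ :=
  ![u 1 * v 2 - u 2 * v 1, u 2 * v 0 - u 0 * v 2, u 0 * v 1 - u 1 * v 0]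

/-- The Lie algebra se(3), as a subset of `ℝ^{4×4}`. -/
def se3 : Set (Matrix (Fin 4) (Fin 4) ℝ) := {A | ∃ ω V, A = blk (crossMat ω) V}

/-- The projection `P : ℝ^{4×4} → se(3)`:
`P([[M₁, m₂],[m₃ᵀ, m₄]]) = [[(M₁ − M₁ᵀ)/2, m₂],[0ᵀ, 0]]`. -/
def projP (M : Matrix (Fin 4) (Fin 4) ℝ) : Matrix (Fin 4) (Fin 4) ℝ :=
  fun i j =>
    if (i : ℕ) < 3 then (if (j : ℕ) < 3 then (M i j - M j i) / 2 else M i j) else 0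

/-- The trace (Frobenius) inner product `⟨M₁, M₂⟩ = tr(M₁ᵀ M₂)`. -/
def mip (M₁ M₂ : Matrix (Fin 4) (Fin 4) ℝ) : ℝ := (M₁ᵀ * M₂).trace

/-- First three components of a vector in `ℝ⁴`. -/
def vbar (x : Fin 4 → ℝ) : Fin 3 → ℝ := fun i => x (Fin.castSucc i)

/-- The vector `[v; c] ∈ ℝ⁴`. -/
def vec4 (v : Fin 3 → ℝ) (c : ℝ) : Fin 4 → ℝ := Fin.snoc v c

/-- The innovation term `Δ(X̂, Y) = −P(Σᵢ kᵢ (I₄ − eᵢeᵢᵀ) ẙᵢ eᵢᵀ)` where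
`eᵢ = X̂yᵢ/|X̂yᵢ|`. -/
def innov {N : ℕ} (k : Fin N → ℝ) (ystar y : Fin N → Fin 4 → ℝ)
    (Xh : Matrix (Fin 4) (Fin 4) ℝ) : Matrix (Fin 4) (Fin 4) ℝ :=
  -projP (∑ i, k i •
    ((1 - vecMulVec (nrm (Xh *ᵥ y i)) (nrm (Xh *ᵥ y i))) *
      vecMulVec (ystar i) (nrm (Xh *ᵥ y i))))

/-!
If `V(E) = 0`, every measurement is fixed by `E` up to a positive scale: `Eẙᵢ = |Eẙᵢ| ẙᵢ`.
The scale is `1`, for a direction (`ẙᵢ,₄ = 0`) because `E` acts on it through the isometry `R`,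
and for a point (`ẙᵢ,₄ ≠ 0`) because `E` preserves the fourth coordinate. Hence `R` fixes two
independent vectors and, since rotations preserve cross products, a basis of `ℝ³`: `R = I₃`.
A point `ẙⱼ = [ȳ; c]` then gives `ȳ + c p = ȳ`, so `p = 0`.
-/

section EuclideanNorm

variable {n : ℕ}

lemma enorm'_sq (x : Fin n → ℝ) : enorm' x ^ 2 = ∑ i, x i ^ 2 :=
  Real.sq_sqrt (Finset.sum_nonneg fun _ _ => sq_nonneg _)

lemma enorm'_nonneg (x : Fin n → ℝ) : 0 ≤ enorm' x :=
  Real.sqrt_nonneg _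

lemma enorm'_eq_zero_iff {x : Fin n → ℝ} : enorm' x = 0 ↔ x = 0 := by
  rw [enorm', Real.sqrt_eq_zero (Finset.sum_nonneg fun _ _ => sq_nonneg _),
    Finset.sum_eq_zero_iff_of_nonneg fun _ _ => sq_nonneg _, funext_iff]
  simp

lemma nrm_eq_self_of_enorm'_eq_one {x : Fin n → ℝ} (h : enorm' x = 1) : nrm x = x := by
  rw [nrm, h, inv_one, one_smul]

lemma eq_enorm'_smul_of_nrm_eq {x y : Fin n → ℝ} (hy : enorm' y = 1) (h : nrm x = y) :
    x = enorm' x • y := by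
  have hx : enorm' x ≠ 0 := by
    intro hx
    rw [nrm, hx, _root_.inv_zero, zero_smul] at h
    simp [← h, enorm'_eq_zero_iff.mpr rfl] at hy
  rw [← h, nrm, smul_smul, mul_inv_cancel₀ hx, one_smul]

lemma enorm'_mulVec_of_transpose_mul_self {R : Matrix (Fin n) (Fin n) ℝ} (hR : Rᵀ * R = 1)
    (v : Fin n → ℝ) : enorm' (R *ᵥ v) = enorm' v := by
  have hdot : ∀ x : Fin n → ℝ, ∑ i, x i ^ 2 = x ⬝ᵥ x := fun x => by simp [dotProduct, sq]
  rw [enorm', enorm', hdot, hdot, dotProduct_mulVec, ← vecMul_transpose, vecMul_vecMul, hR,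
    vecMul_one]

end EuclideanNorm

lemma enorm'_vec4_sq (v : Fin 3 → ℝ) (c : ℝ) : enorm' (vec4 v c) ^ 2 = enorm' v ^ 2 + c ^ 2 := by
  simp only [enorm'_sq, vec4, Fin.sum_univ_castSucc, Fin.snoc_castSucc, Fin.snoc_last]

lemma vec4_vbar (y : Fin 4 → ℝ) : vec4 (vbar y) (y 3) = y :=
  Fin.snoc_init_self y

section BlockMatrix

variable (R : Matrix (Fin 3) (Fin 3) ℝ) (p : Fin 3 → ℝ)

@[simp] lemma toSE3_castSucc_castSucc (i j : Fin 3) : toSE3 R p i.castSucc j.castSucc = R i j := by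
  simp [toSE3]

@[simp] lemma toSE3_castSucc_last (i : Fin 3) : toSE3 R p i.castSucc (Fin.last 3) = p i := by
  simp [toSE3]

@[simp] lemma toSE3_last_castSucc (j : Fin 3) : toSE3 R p (Fin.last 3) j.castSucc = 0 := by
  simp [toSE3]

@[simp] lemma toSE3_last_last : toSE3 R p (Fin.last 3) (Fin.last 3) = 1 := by
  simp [toSE3]

lemma toSE3_mulVec_vec4 (v : Fin 3 → ℝ) (c : ℝ) :
    toSE3 R p *ᵥ vec4 v c = vec4 (R *ᵥ v + c • p) c := by
  ext i
  induction i using Fin.lastCases <;>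
    simp only [mulVec, dotProduct, Fin.sum_univ_castSucc (n := 3), vec4, Fin.snoc_castSucc,
      Fin.snoc_last, toSE3_castSucc_castSucc, toSE3_castSucc_last, toSE3_last_castSucc,
      toSE3_last_last] <;>
    simp [mulVec, dotProduct, mul_comm]

end BlockMatrix

lemma toSE3_one_zero : toSE3 1 0 = 1 := by
  ext i j
  induction i using Fin.lastCases <;> induction j using Fin.lastCases <;>
    simp only [toSE3_castSucc_castSucc, toSE3_castSucc_last, toSE3_last_castSucc,
      toSE3_last_last] <;>
    simp [one_apply, Fin.ext_iff] <;> omega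

lemma toSE3_mulVec_eq_self_of_nrm_eq {R : Matrix (Fin 3) (Fin 3) ℝ} (hR : Rᵀ * R = 1)
    {p v : Fin 3 → ℝ} {c : ℝ} (hy : enorm' (vec4 v c) = 1)
    (h : nrm (toSE3 R p *ᵥ vec4 v c) = vec4 v c) : R *ᵥ v + c • p = v := by
  set s := enorm' (toSE3 R p *ᵥ vec4 v c) with hs_def
  have hx : vec4 (R *ᵥ v + c • p) c = s • vec4 v c := by
    rw [← toSE3_mulVec_vec4]; exact eq_enorm'_smul_of_nrm_eq hy h
  have hs : s = 1 := by
    by_cases hc : c = 0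
    · subst hc
      have hsq : s ^ 2 = 1 := by
        rw [hs_def, toSE3_mulVec_vec4, zero_smul, add_zero, enorm'_vec4_sq,
          enorm'_mulVec_of_transpose_mul_self hR, ← enorm'_vec4_sq, hy, one_pow]
      exact (pow_left_inj₀ (enorm'_nonneg _) zero_le_one two_ne_zero).mp
        (hsq.trans (one_pow 2).symm)
    · have hlast := congrFun hx (Fin.last 3)
      simp only [vec4, Fin.snoc_last, Pi.smul_apply, smul_eq_mul] at hlast
      exact (mul_eq_right₀ hc).mp hlast.symm
  rw [hs, one_smul] at hx
  exact (Fin.snoc_inj.mp hx).1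

lemma transpose_mulVec_cross_mulVec {K : Type*} [CommRing K] (A : Matrix (Fin 3) (Fin 3) K)
    (u v : Fin 3 → K) : Aᵀ *ᵥ (A *ᵥ u) ⨯₃ (A *ᵥ v) = A.det • u ⨯₃ v := by
  ext i
  fin_cases i <;>
    simp [cross_apply, mulVec, dotProduct, Fin.sum_univ_three, det_fin_three] <;> ring

lemma SO3.eq_one_of_mulVec_eq_self {R : Matrix (Fin 3) (Fin 3) ℝ} (hR : SO3 R)
    {u v : Fin 3 → ℝ} (hli : LinearIndependent ℝ ![u, v])
    (hu : R *ᵥ u = u) (hv : R *ᵥ v = v) : R = 1 := by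
  obtain ⟨horth, hdet⟩ := hR
  set w := u ⨯₃ v
  have hw : R *ᵥ w = w := by
    have hRt : Rᵀ *ᵥ w = w := by
      simpa [hu, hv, hdet] using transpose_mulVec_cross_mulVec R u v
    rw [← hRt, mulVec_mulVec, mul_eq_one_comm.mp horth, one_mulVec, hRt]
  set M : Matrix (Fin 3) (Fin 3) ℝ := ![u, v, w]
  have hM : IsUnit M := by
    have hw0 : w ⬝ᵥ w ≠ 0 := dotProduct_self_eq_zero.not.mpr
      (crossProduct_ne_zero_iff_linearIndependent.mpr hli)
    rw [isUnit_iff_isUnit_det, isUnit_iff_ne_zero]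
    -- `det ![u, v, u ⨯₃ v] = (u ⨯₃ v) ⬝ᵥ (u ⨯₃ v)`
    rwa [triple_product_permutation, triple_product_eq_det] at hw0
  have hrows : M * Rᵀ = M := by
    ext i j
    change (M i ᵥ* Rᵀ) j = M i j
    fin_cases i <;> simp [M, vecMul_transpose, hu, hv, hw]
  rw [← transpose_eq_one, ← (hM.mul_eq_left).mp hrows]

lemma weighted_sum_sq_eq_zero_iff {ι : Type*} [Fintype ι] {k f : ι → ℝ} (hk : ∀ i, 0 < k i) :
    ∑ i, k i * f i ^ 2 = 0 ↔ ∀ i, f i = 0 := by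
  rw [Finset.sum_eq_zero_iff_of_nonneg fun i _ => mul_nonneg (hk i).le (sq_nonneg _)]
  simp [(hk _).ne']

theorem lyapunov_unique_minimum_case1_general {N : ℕ} (ystar : Fin N → Fin 4 → ℝ)
    (hunit : ∀ i, enorm' (ystar i) = 1) (k : Fin N → ℝ) (hk : ∀ i, 0 < k i)
    (i₁ i₂ j₁ : Fin N)
    (h4a : ystar i₁ 3 = 0) (h4b : ystar i₂ 3 = 0)
    (hli : LinearIndependent ℝ ![vbar (ystar i₁), vbar (ystar i₂)])
    (hj : ystar j₁ 3 ≠ 0)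
    (E : Matrix (Fin 4) (Fin 4) ℝ) (hE : E ∈ SE3) :
    (1 / 2 : ℝ) * ∑ i, k i * (enorm' (nrm (E *ᵥ ystar i) - ystar i)) ^ 2 = 0 ↔ E = 1 := by
  obtain ⟨R, p, hR, rfl⟩ := hE
  simp only [one_div, mul_eq_zero, inv_eq_zero, two_ne_zero, false_or,
    weighted_sum_sq_eq_zero_iff hk, enorm'_eq_zero_iff, sub_eq_zero]
  constructor
  · intro hfix
    have hmeas (i : Fin N) : R *ᵥ vbar (ystar i) + ystar i 3 • p = vbar (ystar i) := by
      refine toSE3_mulVec_eq_self_of_nrm_eq hR.1 ?_ ?_ <;> rw [vec4_vbar]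
      exacts [hunit i, hfix i]
    have hR1 : R = 1 := hR.eq_one_of_mulVec_eq_self hli
      (by simpa [h4a] using hmeas i₁) (by simpa [h4b] using hmeas i₂)
    have hp : p = 0 := by simpa [hR1, hj] using hmeas j₁
    rw [hR1, hp, toSE3_one_zero]
  · rintro h i
    rw [h, one_mulVec, nrm_eq_self_of_enorm'_eq_one (hunit i)]

/-- under Case 1 of the observability assumption (at least two vectorial
and one position measurement), the cost `V(E) = (1/2)Σᵢ kᵢ |Eẙᵢ/|Eẙᵢ| − ẙᵢ|²` vanishes
iff `E = I₄`. -/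
theorem lyapunov_unique_minimum_case1 {N : ℕ} (ystar : Fin N → Fin 4 → ℝ)
    (hunit : ∀ i, enorm' (ystar i) = 1) (k : Fin N → ℝ) (hk : ∀ i, 0 < k i)
    (i₁ i₂ j₁ : Fin N) (hne : i₁ ≠ i₂)
    (h4a : ystar i₁ 3 = 0) (h4b : ystar i₂ 3 = 0)
    (hli : LinearIndependent ℝ ![vbar (ystar i₁), vbar (ystar i₂)])
    (hj : ystar j₁ 3 ≠ 0)
    (E : Matrix (Fin 4) (Fin 4) ℝ) (hE : E ∈ SE3) :
    (1 / 2 : ℝ) * ∑ i, k i * (enorm' (nrm (E *ᵥ ystar i) - ystar i)) ^ 2 = 0 ↔ E = 1 :=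
  lyapunov_unique_minimum_case1_general ystar hunit k hk i₁ i₂ j₁ h4a h4b hli hj E hE
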